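/- Let S be a measurable space, A a nonempty finite set, P a Markov kernel from S × A to S, and r : S × A → [0, 1] a measurable reward function; for a bounded measurable f : S → ℝ write [Pf](s,a) = ∫_S f(s') P(ds' | s, a). Suppose there exist a constant J* ∈ ℝ and a bounded measurable function v* : S → ℝ satisfying the average-reward Bellman optimality equation J* + v*(s) = max_{a∈A} ( r(s,a) + [Pv*](s,a) ) for all s ∈ S. Let γ ∈ [0, 1) and suppose V : S → ℝ is a bounded measurable function satisfying the discounted Bellman optimality equation V(s) = max_{a∈A} ( r(s,a) + γ[PV](s,a) ) for all s ∈ S. Then |(1 − γ)V(s) − J*| ≤ (1 − γ)·sp(v*) for every s ∈ S, where sp(f) = sup_{s} f(s) − inf_{s} f(s). -/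

import Mathlib

/-!
Put `f = V − v`. At a state `s`, compare the two Bellman equations at a maximiser of one of
them: the rewards cancel and `γ·PV − Pv = γ·Pf − (1 − γ)·Pv`, so
`J + γ·inf f − (1 − γ)·sup v ≤ f(s) ≤ J + γ·sup f − (1 − γ)·inf v`.
Taking the supremum (resp. infimum) over `s` of this self-referential bound gives
`(1 − γ)·sup f ≤ J − (1 − γ)·inf v` and `J − (1 − γ)·sup v ≤ (1 − γ)·inf f`, and
`(1 − γ)V = (1 − γ)f + (1 − γ)v` then lies within `(1 − γ)·sp(v)` of `J`.
-/

open Set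

lemma Finset.exists_sup'_sub_sup'_le {ι : Type*} (s : Finset ι) (H : s.Nonempty)
    (f g : ι → ℝ) :
    ∃ i ∈ s, s.sup' H f - s.sup' H g ≤ f i - g i := by
  obtain ⟨i, hi, hfi⟩ := s.exists_mem_eq_sup' H f
  exact ⟨i, hi, by rw [hfi]; linarith [s.le_sup' g hi]⟩

lemma bddAbove_range_of_abs_le {α : Type*} {f : α → ℝ} {C : ℝ} (h : ∀ x, |f x| ≤ C) :
    BddAbove (range f) :=
  ⟨C, by rintro _ ⟨x, rfl⟩; exact (abs_le.mp (h x)).2⟩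

lemma bddBelow_range_of_abs_le {α : Type*} {f : α → ℝ} {C : ℝ} (h : ∀ x, |f x| ≤ C) :
    BddBelow (range f) :=
  ⟨-C, by rintro _ ⟨x, rfl⟩; exact (abs_le.mp (h x)).1⟩

namespace MeasureTheory

variable {α : Type*} [MeasurableSpace α] {μ : Measure α} {f : α → ℝ}

lemma integrable_of_abs_le [IsFiniteMeasure μ] (hf : Measurable f) {C : ℝ}
    (h : ∀ x, |f x| ≤ C) : Integrable f μ :=
  .of_bound hf.aestronglyMeasurable C (ae_of_all _ h)

variable [IsProbabilityMeasure μ]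

lemma integral_le_ciSup (hf : Integrable f μ) (hb : BddAbove (range f)) :
    ∫ x, f x ∂μ ≤ ⨆ x, f x := by
  simpa using integral_mono hf (integrable_const _) (le_ciSup hb)

lemma ciInf_le_integral (hf : Integrable f μ) (hb : BddBelow (range f)) :
    ⨅ x, f x ≤ ∫ x, f x ∂μ := by
  simpa using integral_mono (integrable_const _) hf (ciInf_le hb)

end MeasureTheory

open MeasureTheory ProbabilityTheory Finset

section Bellman

variable {S A : Type*} [MeasurableSpace S] [MeasurableSpace A] [Fintype A] [Nonempty A]
  {P : Kernel (S × A) S} [IsMarkovKernel P] {r : S → A → ℝ} {J γ : ℝ} {v V : S → ℝ}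

lemma value_sub_bias_le (hγ : γ ∈ Icc (0 : ℝ) 1)
    (hbell : ∀ s, J + v s = univ.sup' univ_nonempty (fun a => r s a + ∫ s', v s' ∂(P (s, a))))
    (hbellV : ∀ s, V s = univ.sup' univ_nonempty
      (fun a => r s a + γ * ∫ s', V s' ∂(P (s, a))))
    (hv : ∀ p, Integrable v (P p)) (hV : ∀ p, Integrable V (P p))
    (hvb : BddBelow (range v)) (hfb : BddAbove (range (fun s => V s - v s))) (s : S) :
    V s - v s ≤ J + γ * (⨆ s', (V s' - v s')) - (1 - γ) * ⨅ s', v s' := by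
  obtain ⟨a, -, ha⟩ := univ.exists_sup'_sub_sup'_le univ_nonempty
    (fun a => r s a + γ * ∫ s', V s' ∂(P (s, a))) (fun a => r s a + ∫ s', v s' ∂(P (s, a)))
  rw [← hbellV, ← hbell] at ha
  have hf := integral_le_ciSup (f := fun x => V x - v x) ((hV (s, a)).sub (hv (s, a))) hfb
  have hv' := ciInf_le_integral (hv (s, a)) hvb
  rw [integral_sub (hV (s, a)) (hv (s, a))] at hf
  linarith [mul_le_mul_of_nonneg_left hf hγ.1, mul_le_mul_of_nonneg_left hv' (sub_nonneg.2 hγ.2)]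

lemma le_value_sub_bias (hγ : γ ∈ Icc (0 : ℝ) 1)
    (hbell : ∀ s, J + v s = univ.sup' univ_nonempty (fun a => r s a + ∫ s', v s' ∂(P (s, a))))
    (hbellV : ∀ s, V s = univ.sup' univ_nonempty
      (fun a => r s a + γ * ∫ s', V s' ∂(P (s, a))))
    (hv : ∀ p, Integrable v (P p)) (hV : ∀ p, Integrable V (P p))
    (hvb : BddAbove (range v)) (hfb : BddBelow (range (fun s => V s - v s))) (s : S) :
    J + γ * (⨅ s', (V s' - v s')) - (1 - γ) * ⨆ s', v s' ≤ V s - v s := by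
  obtain ⟨a, -, ha⟩ := univ.exists_sup'_sub_sup'_le univ_nonempty
    (fun a => r s a + ∫ s', v s' ∂(P (s, a))) (fun a => r s a + γ * ∫ s', V s' ∂(P (s, a)))
  rw [← hbellV, ← hbell] at ha
  have hf := ciInf_le_integral (f := fun x => V x - v x) ((hV (s, a)).sub (hv (s, a))) hfb
  have hv' := integral_le_ciSup (hv (s, a)) hvb
  rw [integral_sub (hV (s, a)) (hv (s, a))] at hf
  linarith [mul_le_mul_of_nonneg_left hf hγ.1, mul_le_mul_of_nonneg_left hv' (sub_nonneg.2 hγ.2)]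

end Bellman

theorem stmt_13_general {S A : Type*} [MeasurableSpace S] [Nonempty S]
    [MeasurableSpace A] [Fintype A] [Nonempty A]
    (P : Kernel (S × A) S) [IsMarkovKernel P]
    (r : S → A → ℝ)
    (J : ℝ) (v : S → ℝ) (hv : Measurable v) (Cv : ℝ) (hvb : ∀ s, |v s| ≤ Cv)
    (hbell : ∀ s, J + v s = Finset.univ.sup' Finset.univ_nonempty
      (fun a => r s a + ∫ s', v s' ∂(P (s, a))))
    (γ : ℝ) (hγ : γ ∈ Set.Ico (0 : ℝ) 1)
    (V : S → ℝ) (hV : Measurable V) (CV : ℝ) (hVb : ∀ s, |V s| ≤ CV)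
    (hbellV : ∀ s, V s = Finset.univ.sup' Finset.univ_nonempty
      (fun a => r s a + γ * ∫ s', V s' ∂(P (s, a)))) :
    ∀ s : S, |(1 - γ) * V s - J| ≤ (1 - γ) * ((⨆ s', v s') - (⨅ s', v s')) := by
  have hfb : ∀ s, |V s - v s| ≤ CV + Cv := fun s =>
    (abs_sub _ _).trans (add_le_add (hVb s) (hvb s))
  have hvA := bddAbove_range_of_abs_le hvb
  have hvB := bddBelow_range_of_abs_le hvb
  have hfA := bddAbove_range_of_abs_le hfb
  have hfB := bddBelow_range_of_abs_le hfb
  have hvi : ∀ p, Integrable v (P p) := fun _ => integrable_of_abs_le hv hvb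
  have hVi : ∀ p, Integrable V (P p) := fun _ => integrable_of_abs_le hV hVb
  have hγ' := Ico_subset_Icc_self hγ
  have h1γ : 0 ≤ 1 - γ := sub_nonneg.2 hγ'.2
  have hsup : (1 - γ) * ⨆ s, (V s - v s) ≤ J - (1 - γ) * ⨅ s, v s := by
    have := ciSup_le (value_sub_bias_le hγ' hbell hbellV hvi hVi hvB hfA)
    linarith
  have hinf : J - (1 - γ) * ⨆ s, v s ≤ (1 - γ) * ⨅ s, (V s - v s) := by
    have := le_ciInf (le_value_sub_bias hγ' hbell hbellV hvi hVi hvA hfB)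
    linarith
  intro s
  rw [abs_le]
  constructor <;> linarith [mul_le_mul_of_nonneg_left (le_ciSup hfA s) h1γ,
    mul_le_mul_of_nonneg_left (ciInf_le hfB s) h1γ, mul_le_mul_of_nonneg_left (le_ciSup hvA s) h1γ,
    mul_le_mul_of_nonneg_left (ciInf_le hvB s) h1γ]

/-- Approximation bound (Lemma 2(ii) of Wei et al. 2020): if `(J*, v*)` solves the
average-reward Bellman optimality equation `J* + v*(s) = max_a (r(s,a) + [Pv*](s,a))` and
`V` solves the `γ`-discounted Bellman optimality equation
`V(s) = max_a (r(s,a) + γ[PV](s,a))` for a Markov kernel `P` and rewards `r ∈ [0,1]`,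
then `|(1 − γ)V(s) − J*| ≤ (1 − γ)·sp(v*)` for every `s`, where
`sp(f) = sup_s f(s) − inf_s f(s)`. -/
theorem stmt_13 {S A : Type*} [MeasurableSpace S] [Nonempty S]
    [MeasurableSpace A] [Fintype A] [Nonempty A]
    (P : Kernel (S × A) S) [IsMarkovKernel P]
    (r : S → A → ℝ) (hr : ∀ s a, r s a ∈ Set.Icc (0 : ℝ) 1)
    (hrm : Measurable fun p : S × A => r p.1 p.2)
    (J : ℝ) (v : S → ℝ) (hv : Measurable v) (Cv : ℝ) (hvb : ∀ s, |v s| ≤ Cv)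
    (hbell : ∀ s, J + v s = Finset.univ.sup' Finset.univ_nonempty
      (fun a => r s a + ∫ s', v s' ∂(P (s, a))))
    (γ : ℝ) (hγ : γ ∈ Set.Ico (0 : ℝ) 1)
    (V : S → ℝ) (hV : Measurable V) (CV : ℝ) (hVb : ∀ s, |V s| ≤ CV)
    (hbellV : ∀ s, V s = Finset.univ.sup' Finset.univ_nonempty
      (fun a => r s a + γ * ∫ s', V s' ∂(P (s, a)))) :
    ∀ s : S, |(1 - γ) * V s - J| ≤ (1 - γ) * ((⨆ s', v s') - (⨅ s', v s')) :=
  stmt_13_general P r J v hv Cv hvb hbell γ hγ V hV CV hVb hbellV
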